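/- Anisotropic (diagonal) UNSURE solution: taking Σ_η = diag(η) with η ∈ ℝⁿ in the general UNSURE problem, the optimal multipliers are η̂_i = ( E_y [ (∂ log p_y/∂y_i (y))² ] )^{-1} for each i = 1, …, n, and the optimal estimator is f_i(y) = y_i + η̂_i · ∂(log p_y)/∂y_i (y); this estimator satisfies E_y ∂f_i/∂y_i (y) = 0 for every i. -/

import Mathlib

open MeasureTheory ProbabilityTheory Real Matrix
open scoped RealInnerProductSpace ENNReal NNReal

noncomputable section

/-- Density of the standard Gaussian distribution `N(0, I_n)` on `ℝⁿ`. -/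
def stdGaussianDensity (n : ℕ) (v : EuclideanSpace ℝ (Fin n)) : ℝ :=
  (2 * π) ^ (-(n : ℝ) / 2) * Real.exp (-‖v‖ ^ 2 / 2)

/-- Divergence of a vector field on `ℝⁿ`: `div f y = ∑ i, ∂f_i/∂y_i (y)`. -/
def diverg {n : ℕ} (f : EuclideanSpace ℝ (Fin n) → EuclideanSpace ℝ (Fin n))
    (y : EuclideanSpace ℝ (Fin n)) : ℝ :=
  ∑ i, fderiv ℝ f y (EuclideanSpace.single i 1) i

/-- Score `∇ log p` of a positive density `p`. -/
def scoreFn {ι : Type*} [Fintype ι] (p : EuclideanSpace ℝ ι → ℝ)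
    (y : EuclideanSpace ℝ ι) : EuclideanSpace ℝ ι :=
  gradient (fun v => Real.log (p v)) y

/-- Density of the Gaussian distribution `N(0, S)` on `ℝⁿ` (for positive-definite `S`). -/
def gaussianDensityCov (n : ℕ) (S : Matrix (Fin n) (Fin n) ℝ)
    (v : EuclideanSpace ℝ (Fin n)) : ℝ :=
  (2 * π) ^ (-(n : ℝ) / 2) * S.det ^ (-(1 : ℝ) / 2) *
    Real.exp (-(∑ i, v i * (S⁻¹ *ᵥ fun j => v j) i) / 2)

namespace DUaux

variable {n : ℕ} {p : EuclideanSpace ℝ (Fin n) → ℝ}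

/-- The `i`-th component of the score, in explicit `fderiv` form. -/
def sFn (p : EuclideanSpace ℝ (Fin n) → ℝ) (i : Fin n) : EuclideanSpace ℝ (Fin n) → ℝ :=
  fun y => fderiv ℝ (fun v => Real.log (p v)) y (EuclideanSpace.single i 1)

lemma sFn_smooth (hp : ∀ v, 0 < p v) (hps : ContDiff ℝ (⊤ : ℕ∞) p) (i : Fin n) :
    ContDiff ℝ (⊤ : ℕ∞) (sFn p i) :=
  ((hps.log fun y => (hp y).ne').fderiv_right (by simp)).clm_apply contDiff_const

lemma score_eq (i : Fin n) (y : EuclideanSpace ℝ (Fin n)) :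
    scoreFn p y i = sFn p i y := by
  have h1 : scoreFn p y i = ⟪scoreFn p y, EuclideanSpace.single i 1⟫ := by
    rw [EuclideanSpace.inner_single_right]; simp
  rw [h1, scoreFn, gradient, InnerProductSpace.toDual_symm_apply]; rfl

lemma dp_eq (hp : ∀ v, 0 < p v) (hps : ContDiff ℝ (⊤ : ℕ∞) p) (i : Fin n)
    (y : EuclideanSpace ℝ (Fin n)) :
    fderiv ℝ p y (EuclideanSpace.single i 1) = p y * sFn p i y := by
  have h3 : HasFDerivAt (fun v => Real.log (p v)) ((p y)⁻¹ • fderiv ℝ p y) y :=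
    HasFDerivAt.log ((hps.differentiable (by simp) y).hasFDerivAt) (hp y).ne'
  have h4 : sFn p i y = (p y)⁻¹ * fderiv ℝ p y (EuclideanSpace.single i 1) := by
    rw [sFn, h3.fderiv]; simp
  rw [h4, ← mul_assoc, mul_inv_cancel₀ (hp y).ne', one_mul]

lemma norm_sq_eq (x : EuclideanSpace ℝ (Fin n)) : ‖x‖^2 = ∑ i, (x i)^2 := by
  rw [EuclideanSpace.norm_eq, Real.sq_sqrt (by positivity)]
  simp [sq_abs]

lemma sq_apply_le (x : EuclideanSpace ℝ (Fin n)) (i : Fin n) : (x i)^2 ≤ ‖x‖^2 := by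
  rw [norm_sq_eq]
  exact Finset.single_le_sum (f := fun j => (x j)^2) (fun j _ => sq_nonneg _) (Finset.mem_univ i)

lemma comp_deriv {f : EuclideanSpace ℝ (Fin n) → EuclideanSpace ℝ (Fin n)}
    {y : EuclideanSpace ℝ (Fin n)} (hdf : DifferentiableAt ℝ f y)
    (v : EuclideanSpace ℝ (Fin n)) (i : Fin n) :
    (fderiv ℝ f y v) i = fderiv ℝ (fun y => f y i) y v := by
  have h : HasFDerivAt (⇑(EuclideanSpace.proj (𝕜 := ℝ) i) ∘ f)
      ((EuclideanSpace.proj i).comp (fderiv ℝ f y)) y :=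
    (EuclideanSpace.proj i).hasFDerivAt.comp y hdf.hasFDerivAt
  rw [show (fun y => f y i) = (⇑(EuclideanSpace.proj (𝕜 := ℝ) i) ∘ f) from rfl, h.fderiv]
  rfl

lemma gi_deriv {f : EuclideanSpace ℝ (Fin n) → EuclideanSpace ℝ (Fin n)}
    (hf : ContDiff ℝ 1 f) (i : Fin n) (y : EuclideanSpace ℝ (Fin n)) :
    fderiv ℝ (fun y => f y i - y i) y (EuclideanSpace.single i 1)
      = fderiv ℝ f y (EuclideanSpace.single i 1) i - 1 := by
  have h1 : HasFDerivAt (⇑(EuclideanSpace.proj (𝕜 := ℝ) i) ∘ f)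
      ((EuclideanSpace.proj i).comp (fderiv ℝ f y)) y :=
    (EuclideanSpace.proj i).hasFDerivAt.comp y (hf.differentiable one_ne_zero y).hasFDerivAt
  have h2 := h1.sub (EuclideanSpace.proj (𝕜 := ℝ) i).hasFDerivAt
  have h3 : (fun y : EuclideanSpace ℝ (Fin n) => f y i - y i)
      = (⇑(EuclideanSpace.proj (𝕜 := ℝ) i) ∘ f - ⇑(EuclideanSpace.proj (𝕜 := ℝ) i)) := rfl
  rw [h3, h2.fderiv]
  have h4 : (fderiv ℝ f y (EuclideanSpace.single i 1)) i
      = (EuclideanSpace.proj (𝕜 := ℝ) i).comp (fderiv ℝ f y) (EuclideanSpace.single i 1) := rfl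
  rw [ContinuousLinearMap.sub_apply, h4]
  congr 1
  show (EuclideanSpace.single (𝕜 := ℝ) i 1) i = 1
  simp [EuclideanSpace.single_apply]

lemma fstar_deriv (hp : ∀ v, 0 < p v) (hps : ContDiff ℝ (⊤ : ℕ∞) p) (η : Fin n → ℝ)
    (i : Fin n) (y : EuclideanSpace ℝ (Fin n)) :
    fderiv ℝ (fun y => y + (EuclideanSpace.equiv (Fin n) ℝ).symm
        (fun j => η j * scoreFn p y j)) y (EuclideanSpace.single i 1) i
      = 1 + η i * fderiv ℝ (sFn p i) y (EuclideanSpace.single i 1) := by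
  set c : EuclideanSpace ℝ (Fin n) → EuclideanSpace ℝ (Fin n) :=
    fun y => (EuclideanSpace.equiv (Fin n) ℝ).symm (fun j => η j * scoreFn p y j) with hc
  have hcdiff : Differentiable ℝ c := by
    apply (((EuclideanSpace.equiv (Fin n) ℝ).symm : (Fin n → ℝ) ≃L[ℝ] _).differentiable).comp
    apply differentiable_pi.2
    intro j
    have h : (fun y => η j * scoreFn p y j) = fun y => η j * sFn p j y := by
      funext y; rw [score_eq]
    rw [h]
    exact ((sFn_smooth hp hps j).differentiable (by simp)).const_mul _
  have hdiff : DifferentiableAt ℝ (fun y => y + c y) y :=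
    differentiableAt_id.add (hcdiff y)
  rw [comp_deriv hdiff]
  have heq : (fun y => (y + c y) i) = fun y => y i + η i * sFn p i y := by
    funext z
    rw [show (z + c z) i = z i + η i * scoreFn p z i from rfl, score_eq]
  rw [heq]
  have h3 : HasFDerivAt (fun z : EuclideanSpace ℝ (Fin n) => z i + η i * sFn p i z)
      ((EuclideanSpace.proj i) + η i • fderiv ℝ (sFn p i) y) y :=
    (EuclideanSpace.proj i).hasFDerivAt.add
      ((((sFn_smooth hp hps i).differentiable (by simp)) y).hasFDerivAt.const_mul _)
  rw [h3.fderiv, ContinuousLinearMap.add_apply, ContinuousLinearMap.smul_apply, smul_eq_mul]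
  congr 1
  show (EuclideanSpace.single (𝕜 := ℝ) i 1) i = 1
  simp [EuclideanSpace.single_apply]

/-- Integration by parts with constant `1`: integral of a directional derivative vanishes. -/
lemma ibp_zero {g : EuclideanSpace ℝ (Fin n) → ℝ} (v : EuclideanSpace ℝ (Fin n))
    (hg : Differentiable ℝ g) (h1 : Integrable g volume)
    (h2 : Integrable (fun y => fderiv ℝ g y v) volume) :
    ∫ y, fderiv ℝ g y v = 0 := by
  have h := integral_mul_fderiv_eq_neg_fderiv_mul_of_integrable (μ := volume)
    (f := fun _ => (1:ℝ)) (g := g) (v := v) ?_ ?_ ?_ (fun x _ => differentiableAt_const 1) (fun x _ => hg x)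
  · simpa using h
  · simpa using (integrable_zero _ ℝ (volume : Measure (EuclideanSpace ℝ (Fin n))))
  · simpa using h2
  · simpa using h1

end DUaux

open DUaux

/-- **Anisotropic (diagonal) UNSURE solution.** Taking `Σ_η = diag(η)`, the optimal multipliers
are `η̂_i = (E_y (∂ log p_y/∂y_i)²)⁻¹` and the optimal estimator is
`f_i(y) = y_i + η̂_i ∂(log p_y)/∂y_i (y)`; it satisfies `E_y ∂f_i/∂y_i (y) = 0` for every `i`,
and minimizes `E_y ‖f(y) − y‖²` over this constrained class. -/
theorem diagonal_unsure
    {Ω : Type*} [MeasurableSpace Ω] (P : Measure Ω) [IsProbabilityMeasure P]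
    {n : ℕ} (X ε : Ω → EuclideanSpace ℝ (Fin n))
    (hX : Measurable X) (hε : Measurable ε) (hXε : IndepFun X ε P)
    (S : Matrix (Fin n) (Fin n) ℝ) (hS : S.PosDef)
    (hεlaw : Measure.map ε P
      = volume.withDensity fun v => ENNReal.ofReal (gaussianDensityCov n S v))
    (Y : Ω → EuclideanSpace ℝ (Fin n)) (hYdef : Y = fun ω => X ω + ε ω)
    (p : EuclideanSpace ℝ (Fin n) → ℝ) (hp_pos : ∀ v, 0 < p v) (hp_smooth : ContDiff ℝ (⊤ : ℕ∞) p)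
    (hp_law : Measure.map Y P = volume.withDensity fun v => ENNReal.ofReal (p v))
    (hFint : ∀ i, Integrable (fun ω => (scoreFn p (Y ω) i) ^ 2) P)
    (hFne : ∀ i, ∫ ω, (scoreFn p (Y ω) i) ^ 2 ∂P ≠ 0)
    (etaHat : Fin n → ℝ)
    (hetaHat : ∀ i, etaHat i = (∫ ω, (scoreFn p (Y ω) i) ^ 2 ∂P)⁻¹)
    (fstar : EuclideanSpace ℝ (Fin n) → EuclideanSpace ℝ (Fin n))
    (hfstar : fstar = fun y => y + (EuclideanSpace.equiv (Fin n) ℝ).symm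
      fun i => etaHat i * scoreFn p y i)
    (hint1 : Integrable (fun ω => ‖fstar (Y ω) - Y ω‖ ^ 2) P)
    (hint2 : ∀ i, Integrable
      (fun ω => fderiv ℝ fstar (Y ω) (EuclideanSpace.single i 1) i) P) :
    (∀ i, ∫ ω, fderiv ℝ fstar (Y ω) (EuclideanSpace.single i 1) i ∂P = 0)
    ∧ ∀ f : EuclideanSpace ℝ (Fin n) → EuclideanSpace ℝ (Fin n), ContDiff ℝ 1 f →
        Integrable (fun ω => ‖f (Y ω) - Y ω‖ ^ 2) P →
        (∀ i, Integrable (fun ω => fderiv ℝ f (Y ω) (EuclideanSpace.single i 1) i) P) →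
        (∀ i, ∫ ω, fderiv ℝ f (Y ω) (EuclideanSpace.single i 1) i ∂P = 0) →
        ∫ ω, ‖fstar (Y ω) - Y ω‖ ^ 2 ∂P ≤ ∫ ω, ‖f (Y ω) - Y ω‖ ^ 2 ∂P := by
  have hY : Measurable Y := by rw [hYdef]; exact hX.add hε
  have hpc : Continuous p := hp_smooth.continuous
  have hpnn : Measurable fun v => (p v).toNNReal := hpc.measurable.real_toNNReal
  have hdens : (volume.withDensity fun v => ENNReal.ofReal (p v))
      = volume.withDensity (fun v => (((fun v => (p v).toNNReal) v : ℝ≥0) : ℝ≥0∞)) := rfl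
  -- transfer of integrals from `P` (pushed by `Y`) to Lebesgue with density `p`
  have hconvE : ∀ h : EuclideanSpace ℝ (Fin n) → ℝ, Continuous h →
      ∫ ω, h (Y ω) ∂P = ∫ y, h y * p y := by
    intro h hc
    rw [← integral_map hY.aemeasurable hc.aestronglyMeasurable, hp_law, hdens,
      integral_withDensity_eq_integral_smul hpnn h]
    congr 1; funext y
    show (p y).toNNReal • h y = h y * p y
    rw [NNReal.smul_def, Real.coe_toNNReal _ (hp_pos y).le]; simp [mul_comm]
  have hconvI : ∀ h : EuclideanSpace ℝ (Fin n) → ℝ, Continuous h →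
      (Integrable (fun ω => h (Y ω)) P ↔ Integrable (fun y => h y * p y) volume) := by
    intro h hc
    have h1 : Integrable (fun ω => h (Y ω)) P ↔ Integrable h (Measure.map Y P) :=
      (integrable_map_measure hc.aestronglyMeasurable hY.aemeasurable).symm
    rw [h1, hp_law, hdens, integrable_withDensity_iff_integrable_smul hpnn]
    constructor
    · intro hh
      refine hh.congr (Filter.Eventually.of_forall fun y => ?_)
      show (p y).toNNReal • h y = h y * p y
      rw [NNReal.smul_def, Real.coe_toNNReal _ (hp_pos y).le]; simp [mul_comm]
    · intro hh
      refine hh.congr (Filter.Eventually.of_forall fun y => ?_)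
      show h y * p y = (p y).toNNReal • h y
      rw [NNReal.smul_def, Real.coe_toNNReal _ (hp_pos y).le]; simp [mul_comm]
  -- basic continuity facts
  have hs_cont : ∀ i, Continuous (sFn p i) :=
    fun i => (sFn_smooth hp_pos hp_smooth i).continuous
  have hds_cont : ∀ i, Continuous
      (fun y => fderiv ℝ (sFn p i) y (EuclideanSpace.single i 1)) :=
    fun i => by
      have h : ContDiff ℝ (⊤ : ℕ∞) (fun y => fderiv ℝ (sFn p i) y (EuclideanSpace.single i 1)) :=
        ((sFn_smooth hp_pos hp_smooth i).fderiv_right (by simp)).clm_apply contDiff_const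
      exact h.continuous
  have hscore_rw : ∀ i, (fun ω => (scoreFn p (Y ω) i) ^ 2)
      = fun ω => (sFn p i (Y ω))^2 := fun i => funext fun ω => by rw [score_eq]
  -- integrability over Lebesgue measure
  have Ip : Integrable p volume := by
    have := (hconvI (fun _ => (1:ℝ)) continuous_const).mp (integrable_const 1)
    simpa using this
  have hp1 : ∫ y, p y = 1 := by
    have h1 := hconvE (fun _ => (1:ℝ)) continuous_const
    simp only [integral_const, measure_univ, ENNReal.toReal_one, smul_eq_mul, mul_one,
      one_mul] at h1
    simpa using h1.symm
  have Is2 : ∀ i, Integrable (fun y => (sFn p i y)^2 * p y) volume := by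
    intro i
    exact (hconvI _ ((hs_cont i).pow 2)).mp ((hscore_rw i) ▸ hFint i)
  have Isp : ∀ i, Integrable (fun y => sFn p i y * p y) volume := by
    intro i
    refine (((Is2 i).add Ip).div_const 2).mono'
      (((hs_cont i).mul hpc).aestronglyMeasurable)
      (Filter.Eventually.of_forall fun y => ?_)
    have hp0 := (hp_pos y).le
    show ‖sFn p i y * p y‖ ≤ ((sFn p i y)^2 * p y + p y) / 2
    rw [Real.norm_eq_abs, abs_mul, abs_of_nonneg hp0]
    nlinarith [mul_nonneg (sq_nonneg (|sFn p i y| - 1)) hp0, sq_abs (sFn p i y),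
      abs_nonneg (sFn p i y)]
  -- the value B i
  set B : Fin n → ℝ := fun i => ∫ ω, (scoreFn p (Y ω) i) ^ 2 ∂P with hB
  have hBvol : ∀ i, B i = ∫ y, (sFn p i y)^2 * p y := by
    intro i
    rw [hB]
    simp only
    rw [hscore_rw i, hconvE (fun y => (sFn p i y)^2) ((hs_cont i).pow 2)]
  have hBpos : ∀ i, 0 < B i := by
    intro i
    have h0 : 0 ≤ B i := by
      rw [hBvol i]
      exact integral_nonneg fun y => mul_nonneg (sq_nonneg _) (hp_pos y).le
    rcases lt_or_eq_of_le h0 with h | h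
    · exact h
    · exact absurd h.symm (hFne i)
  have hηB : ∀ i, etaHat i = (B i)⁻¹ := hetaHat
  have hηne : ∀ i, etaHat i ≠ 0 := fun i => by
    rw [hηB i]; exact inv_ne_zero (hBpos i).ne'
  subst hfstar
  -- rewrite the derivative of fstar
  have hfd : ∀ i, (fun ω => fderiv ℝ (fun y => y + (EuclideanSpace.equiv (Fin n) ℝ).symm
        fun j => etaHat j * scoreFn p y j) (Y ω) (EuclideanSpace.single i 1) i)
      = fun ω => 1 + etaHat i * fderiv ℝ (sFn p i) (Y ω) (EuclideanSpace.single i 1) :=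
    fun i => funext fun ω => fstar_deriv hp_pos hp_smooth etaHat i (Y ω)
  have Idsp : ∀ i, Integrable
      (fun y => fderiv ℝ (sFn p i) y (EuclideanSpace.single i 1) * p y) volume := by
    intro i
    have h2 : Integrable (fun y => (1 + etaHat i * fderiv ℝ (sFn p i) y
        (EuclideanSpace.single i 1)) * p y) volume :=
      (hconvI _ (continuous_const.add (continuous_const.mul (hds_cont i)))).mp
        ((hfd i) ▸ hint2 i)
    have h3 : Integrable (fun y => etaHat i *
        (fderiv ℝ (sFn p i) y (EuclideanSpace.single i 1) * p y)) volume := by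
      have h25 := h2.sub Ip
      refine h25.congr (Filter.Eventually.of_forall fun y => ?_)
      show (1 + etaHat i * fderiv ℝ (sFn p i) y (EuclideanSpace.single i 1)) * p y - p y
        = etaHat i * (fderiv ℝ (sFn p i) y (EuclideanSpace.single i 1) * p y)
      ring
    have h4 := h3.const_mul (etaHat i)⁻¹
    refine h4.congr (Filter.Eventually.of_forall fun y => ?_)
    exact inv_mul_cancel_left₀ (hηne i) _
  have hpdiff : Differentiable ℝ p := hp_smooth.differentiable (by simp)
  -- Stein identity for the score: ∫ ds_i p = - B i
  have hstein : ∀ i, ∫ y, fderiv ℝ (sFn p i) y (EuclideanSpace.single i 1) * p y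
      = - B i := by
    intro i
    have hfg' : Integrable (fun y => sFn p i y
        * fderiv ℝ p y (EuclideanSpace.single i 1)) volume := by
      refine (Is2 i).congr (Filter.Eventually.of_forall fun y => ?_)
      show (sFn p i y)^2 * p y = sFn p i y * fderiv ℝ p y (EuclideanSpace.single i 1)
      rw [dp_eq hp_pos hp_smooth]; ring
    have key := integral_mul_fderiv_eq_neg_fderiv_mul_of_integrable (μ := volume)
      (f := sFn p i) (g := p) (v := EuclideanSpace.single i 1)
      (Idsp i) hfg' (Isp i) (fun x _ => (sFn_smooth hp_pos hp_smooth i).differentiable (by simp) x) (fun x _ => hpdiff x)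
    have hL : ∫ y, sFn p i y * fderiv ℝ p y (EuclideanSpace.single i 1) = B i := by
      rw [hBvol i]
      congr 1; funext y
      rw [dp_eq hp_pos hp_smooth]; ring
    rw [hL] at key
    linarith [key]
  constructor
  · -- first conjunct
    intro i
    rw [hfd i, hconvE (fun y => 1 + etaHat i * fderiv ℝ (sFn p i) y (EuclideanSpace.single i 1)) (continuous_const.add (continuous_const.mul (hds_cont i)))]
    have hsplit : (fun y => (1 + etaHat i * fderiv ℝ (sFn p i) y
        (EuclideanSpace.single i 1)) * p y)
        = fun y => p y + etaHat i * (fderiv ℝ (sFn p i) y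
          (EuclideanSpace.single i 1) * p y) := by
      funext y; ring
    rw [hsplit, integral_add Ip ((Idsp i).const_mul _), integral_const_mul, hstein i, hp1,
      hηB i]
    rw [mul_neg, mul_comm]
    rw [show B i * (B i)⁻¹ = 1 from mul_inv_cancel₀ (hBpos i).ne']
    ring
  · -- second conjunct: optimality
    intro f hf1 hf2 hf3 hf4
    have hfc : Continuous f := hf1.continuous
    have hgic : ∀ i, Continuous (fun y : EuclideanSpace ℝ (Fin n) => f y i - y i) :=
      fun i => (((EuclideanSpace.proj (𝕜 := ℝ) i).continuous.comp hfc).sub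
        (EuclideanSpace.proj (𝕜 := ℝ) i).continuous)
    have hgid : ∀ i, Differentiable ℝ (fun y : EuclideanSpace ℝ (Fin n) => f y i - y i) :=
      fun i => (((EuclideanSpace.proj (𝕜 := ℝ) i).differentiable.comp
        (hf1.differentiable one_ne_zero)).sub (EuclideanSpace.proj (𝕜 := ℝ) i).differentiable)
    have hdf_cont : ∀ i, Continuous
        (fun y => fderiv ℝ f y (EuclideanSpace.single i 1) i) := by
      intro i
      exact (EuclideanSpace.proj (𝕜 := ℝ) i).continuous.comp
        ((ContinuousLinearMap.apply ℝ (EuclideanSpace ℝ (Fin n))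
          (EuclideanSpace.single i 1)).continuous.comp (hf1.continuous_fderiv one_ne_zero))
    have hnormf_cont : Continuous (fun y : EuclideanSpace ℝ (Fin n) => ‖f y - y‖^2) :=
      ((hfc.sub continuous_id).norm).pow 2
    have Inorm2 : Integrable (fun y => ‖f y - y‖^2 * p y) volume :=
      (hconvI _ hnormf_cont).mp hf2
    have Igi2 : ∀ i, Integrable (fun y => (f y i - y i)^2 * p y) volume := by
      intro i
      refine Inorm2.mono' (((hgic i).pow 2).mul hpc).aestronglyMeasurable
        (Filter.Eventually.of_forall fun y => ?_)
      rw [Real.norm_eq_abs, abs_of_nonneg (mul_nonneg (sq_nonneg _) (hp_pos y).le)]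
      refine mul_le_mul_of_nonneg_right ?_ (hp_pos y).le
      exact sq_apply_le (f y - y) i
    have Igi : ∀ i, Integrable (fun y => (f y i - y i) * p y) volume := by
      intro i
      refine (((Igi2 i).add Ip).div_const 2).mono'
        (((hgic i).mul hpc).aestronglyMeasurable)
        (Filter.Eventually.of_forall fun y => ?_)
      have hp0 := (hp_pos y).le
      show ‖(f y i - y i) * p y‖ ≤ ((f y i - y i)^2 * p y + p y) / 2
      rw [Real.norm_eq_abs, abs_mul, abs_of_nonneg hp0]
      nlinarith [mul_nonneg (sq_nonneg (|f y i - y i| - 1)) hp0, sq_abs (f y i - y i),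
        abs_nonneg (f y i - y i)]
    have Igs : ∀ i, Integrable
        (fun y => (f y i - y i) * (p y * sFn p i y)) volume := by
      intro i
      refine ((((Igi2 i).add (Is2 i)).div_const 2)).mono'
        (((hgic i).mul (hpc.mul (hs_cont i))).aestronglyMeasurable)
        (Filter.Eventually.of_forall fun y => ?_)
      have hp0 := (hp_pos y).le
      show ‖(f y i - y i) * (p y * sFn p i y)‖
        ≤ ((f y i - y i)^2 * p y + (sFn p i y)^2 * p y) / 2
      rw [Real.norm_eq_abs, abs_mul, abs_mul, abs_of_nonneg hp0]
      nlinarith [mul_nonneg (sq_nonneg (|f y i - y i| - |sFn p i y|)) hp0,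
        sq_abs (f y i - y i), sq_abs (sFn p i y), abs_nonneg (f y i - y i),
        abs_nonneg (sFn p i y)]
    -- Stein identity for g_i: ∫ g_i s_i p = 1
    have hGS : ∀ i, ∫ y, (f y i - y i) * (p y * sFn p i y) = 1 := by
      intro i
      have Idgi : Integrable (fun y => (fderiv ℝ f y (EuclideanSpace.single i 1) i - 1)
          * p y) volume := by
        have ha := (hconvI _ (hdf_cont i)).mp (hf3 i)
        have hb := ha.sub Ip
        refine hb.congr (Filter.Eventually.of_forall fun y => ?_)
        show fderiv ℝ f y (EuclideanSpace.single i 1) i * p y - p y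
          = (fderiv ℝ f y (EuclideanSpace.single i 1) i - 1) * p y
        ring
      have hf'g : Integrable (fun y =>
          fderiv ℝ (fun y => f y i - y i) y (EuclideanSpace.single i 1) * p y) volume := by
        refine Idgi.congr (Filter.Eventually.of_forall fun y => ?_)
        show (fderiv ℝ f y (EuclideanSpace.single i 1) i - 1) * p y
          = fderiv ℝ (fun y => f y i - y i) y (EuclideanSpace.single i 1) * p y
        rw [gi_deriv hf1]
      have hfg' : Integrable (fun y => (f y i - y i)
          * fderiv ℝ p y (EuclideanSpace.single i 1)) volume := by
        refine (Igs i).congr (Filter.Eventually.of_forall fun y => ?_)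
        show (f y i - y i) * (p y * sFn p i y)
          = (f y i - y i) * fderiv ℝ p y (EuclideanSpace.single i 1)
        rw [dp_eq hp_pos hp_smooth]
      have key := integral_mul_fderiv_eq_neg_fderiv_mul_of_integrable (μ := volume)
        (f := fun y => f y i - y i) (g := p) (v := EuclideanSpace.single i 1)
        hf'g hfg' (Igi i) (fun x _ => hgid i x) (fun x _ => hpdiff x)
      have hR : ∫ y, fderiv ℝ (fun y => f y i - y i) y (EuclideanSpace.single i 1) * p y
          = -1 := by
        have h5 : (fun y => fderiv ℝ (fun y => f y i - y i) y (EuclideanSpace.single i 1)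
            * p y) = fun y => fderiv ℝ f y (EuclideanSpace.single i 1) i * p y - p y := by
          funext y; rw [gi_deriv hf1]; ring
        rw [h5, integral_sub ((hconvI _ (hdf_cont i)).mp (hf3 i)) Ip,
          ← hconvE _ (hdf_cont i), hf4 i, hp1]
        norm_num
      have hL : ∫ y, (f y i - y i) * fderiv ℝ p y (EuclideanSpace.single i 1)
          = ∫ y, (f y i - y i) * (p y * sFn p i y) := by
        congr 1; funext y; rw [dp_eq hp_pos hp_smooth]
      rw [hL, hR] at key
      rw [key]; norm_num
    -- per-coordinate Cauchy-Schwarz lower bound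
    have hlower : ∀ i, etaHat i ≤ ∫ y, (f y i - y i)^2 * p y := by
      intro i
      set A : ℝ := ∫ y, (f y i - y i)^2 * p y with hA
      have hexpand : ∫ y, (B i * (f y i - y i) - sFn p i y)^2 * p y
          = B i^2 * A - 2 * B i * 1 + B i := by
        have h6 : (fun y => (B i * (f y i - y i) - sFn p i y)^2 * p y)
            = fun y => B i^2 * ((f y i - y i)^2 * p y)
              - 2 * B i * ((f y i - y i) * (p y * sFn p i y))
              + (sFn p i y)^2 * p y := by
          funext y; ring
        have hI1 : Integrable (fun y => B i^2 * ((f y i - y i)^2 * p y)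
            - 2 * B i * ((f y i - y i) * (p y * sFn p i y))) volume :=
          ((Igi2 i).const_mul (B i^2)).sub ((Igs i).const_mul (2 * B i))
        rw [h6, integral_add hI1 (Is2 i),
          integral_sub ((Igi2 i).const_mul (B i^2)) ((Igs i).const_mul (2 * B i)),
          integral_const_mul, integral_const_mul, hGS i, ← hA, ← hBvol i]
      have hnn : 0 ≤ ∫ y, (B i * (f y i - y i) - sFn p i y)^2 * p y :=
        integral_nonneg fun y => mul_nonneg (sq_nonneg _) (hp_pos y).le
      rw [hexpand] at hnn
      have hb := hBpos i
      have h1 : 1 ≤ B i * A := by nlinarith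
      rw [hηB i, inv_eq_one_div, div_le_iff₀ hb]
      nlinarith
    -- sum up
    have hRHS : ∫ ω, ‖f (Y ω) - Y ω‖^2 ∂P = ∑ i, ∫ y, (f y i - y i)^2 * p y := by
      rw [hconvE _ hnormf_cont]
      have h7 : (fun y => ‖f y - y‖^2 * p y)
          = fun y => ∑ i, (f y i - y i)^2 * p y := by
        funext y
        rw [norm_sq_eq, Finset.sum_mul]
        exact Finset.sum_congr rfl fun i _ => rfl
      rw [h7, integral_finset_sum _ (fun i _ => Igi2 i)]
    have hLHS : ∫ ω, ‖(fun y => y + (EuclideanSpace.equiv (Fin n) ℝ).symm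
        fun j => etaHat j * scoreFn p y j) (Y ω) - Y ω‖^2 ∂P = ∑ i, etaHat i := by
      have hsc : Continuous (fun y : EuclideanSpace ℝ (Fin n) =>
          ‖(y + (EuclideanSpace.equiv (Fin n) ℝ).symm
            fun j => etaHat j * scoreFn p y j) - y‖^2) := by
        have h8 : (fun y : EuclideanSpace ℝ (Fin n) =>
            ‖(y + (EuclideanSpace.equiv (Fin n) ℝ).symm
              fun j => etaHat j * scoreFn p y j) - y‖^2)
            = fun y => ∑ j, (etaHat j * sFn p j y)^2 := by
          funext y
          rw [add_sub_cancel_left, norm_sq_eq]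
          exact Finset.sum_congr rfl fun j _ => by
            rw [show ((EuclideanSpace.equiv (Fin n) ℝ).symm
              fun j => etaHat j * scoreFn p y j) j = etaHat j * scoreFn p y j from rfl,
              score_eq]
        rw [h8]
        exact continuous_finset_sum _ fun j _ => (continuous_const.mul (hs_cont j)).pow 2
      rw [hconvE _ hsc]
      have h9 : (fun y => ‖(y + (EuclideanSpace.equiv (Fin n) ℝ).symm
          fun j => etaHat j * scoreFn p y j) - y‖^2 * p y)
          = fun y => ∑ j, etaHat j^2 * ((sFn p j y)^2 * p y) := by
        funext y
        rw [add_sub_cancel_left, norm_sq_eq, Finset.sum_mul]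
        exact Finset.sum_congr rfl fun j _ => by
          rw [show ((EuclideanSpace.equiv (Fin n) ℝ).symm
            fun j => etaHat j * scoreFn p y j) j = etaHat j * scoreFn p y j from rfl,
            score_eq]
          ring
      rw [h9, integral_finset_sum _ (fun j _ => (Is2 j).const_mul _)]
      refine Finset.sum_congr rfl fun j _ => ?_
      rw [integral_const_mul, ← hBvol j, hηB j, pow_two, mul_assoc,
        inv_mul_cancel₀ (hBpos j).ne', mul_one]
    rw [hRHS, hLHS]
    exact Finset.sum_le_sum fun i _ => hlower i
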